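/- The union of two distinct elementary s-t paths in a directed graph is never itself the arc set of an elementary s-t path. In other words, the shortest-path problem (over elementary s-t paths) is union-free. -/

import Mathlib

/-!
Along an elementary path the tails of the arcs are pairwise distinct, so from each vertex
the path leaves through a unique arc. Hence an elementary s-t path `p` whose arcs all lie
on another one `q` is `q`: both leave `s` through the same arc and, by induction, agree
from its head on. The union of two distinct elementary s-t paths would therefore have to
equal both of them.
-/

/-- An elementary s-t path given as a list of arcs. -/
def IsElemPath {V A : Type} (tail head : A → V) (s t : V) (p : List A) : Prop :=
  p ≠ [] ∧ p.Chain' (fun a b => head a = tail b) ∧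
  (∀ a ∈ p.head?, tail a = s) ∧ (∀ a ∈ p.getLast?, head a = t) ∧
  (p.map tail ++ [t]).Nodup

namespace IsElemPath

variable {V A : Type} {tail head : A → V} {s t : V} {a : A} {p : List A}

theorem tail_eq_source (h : IsElemPath tail head s t (a :: p)) : tail a = s :=
  h.2.2.1 a rfl

theorem nodup_map_tail (h : IsElemPath tail head s t p) : (p.map tail).Nodup :=
  (List.nodup_append.mp h.2.2.2.2).1

theorem nodup (h : IsElemPath tail head s t p) : p.Nodup :=
  h.nodup_map_tail.of_map tail

theorem tail_ne_target (h : IsElemPath tail head s t p) (ha : a ∈ p) : tail a ≠ t := fun hat =>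
  (List.nodup_append'.mp h.2.2.2.2).2.2 (hat ▸ List.mem_map_of_mem ha) (List.mem_singleton_self t)

theorem eq_of_tail_eq (h : IsElemPath tail head s t p) {b : A} (ha : a ∈ p) (hb : b ∈ p)
    (hab : tail a = tail b) : a = b :=
  List.inj_on_of_nodup_map h.nodup_map_tail ha hb hab

theorem head_eq_target_iff (h : IsElemPath tail head s t (a :: p)) : head a = t ↔ p = [] := by
  cases p with
  | nil => exact ⟨fun _ => rfl, fun _ => h.2.2.2.1 a rfl⟩
  | cons b p =>
    have hab : head a = tail b := (List.isChain_cons_cons.mp h.2.1).1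
    simpa [hab] using h.tail_ne_target (List.mem_cons_of_mem a List.mem_cons_self)

theorem of_cons {b : A} (h : IsElemPath tail head s t (a :: b :: p)) :
    IsElemPath tail head (head a) t (b :: p) := by
  obtain ⟨-, hchain, -, hlast, hnodup⟩ := h
  refine ⟨List.cons_ne_nil _ _, (List.isChain_cons_cons.mp hchain).2, ?_, ?_, ?_⟩
  · rintro x ⟨⟩
    exact (List.isChain_cons_cons.mp hchain).1.symm
  · intro x hx
    exact hlast x (by rwa [List.getLast?_cons_cons])
  · exact (List.nodup_cons.mp hnodup).2

theorem eq_of_subset {q : List A} (hp : IsElemPath tail head s t p)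
    (hq : IsElemPath tail head s t q) (hpq : p ⊆ q) : p = q := by
  induction p generalizing s q with
  | nil => exact absurd rfl hp.1
  | cons a p ih =>
    obtain ⟨b, q, rfl⟩ := List.exists_cons_of_ne_nil hq.1
    obtain rfl : a = b := hq.eq_of_tail_eq (hpq List.mem_cons_self) List.mem_cons_self
      (hp.tail_eq_source.trans hq.tail_eq_source.symm)
    have hsub : p ⊆ q := fun x hx =>
      (List.mem_cons.mp (hpq (List.mem_cons_of_mem a hx))).resolve_left
        (by rintro rfl; exact (List.nodup_cons.mp hp.nodup).1 hx)
    have hnil : p = [] ↔ q = [] := hp.head_eq_target_iff.symm.trans hq.head_eq_target_iff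
    cases p with
    | nil => rw [hnil.mp rfl]
    | cons c p =>
      obtain ⟨d, q, rfl⟩ := List.exists_cons_of_ne_nil (mt hnil.mpr (List.cons_ne_nil c p))
      rw [ih hp.of_cons hq.of_cons hsub]

end IsElemPath

theorem stmt_2_general {V A : Type} [DecidableEq A]
    (tail head : A → V) (s t : V)
    (p₁ p₂ : List A)
    (h₁ : IsElemPath tail head s t p₁) (h₂ : IsElemPath tail head s t p₂)
    (hne : p₁.toFinset ≠ p₂.toFinset) :
    ¬ ∃ q : List A, IsElemPath tail head s t q ∧
      q.toFinset = p₁.toFinset ∪ p₂.toFinset := by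
  rintro ⟨q, hq, hunion⟩
  have hsub : ∀ p : List A, p.toFinset ⊆ q.toFinset → p ⊆ q := fun p hp x hx =>
    List.mem_toFinset.mp (hp (List.mem_toFinset.mpr hx))
  have e₁ : p₁ = q := h₁.eq_of_subset hq (hsub p₁ (hunion ▸ Finset.subset_union_left))
  have e₂ : p₂ = q := h₂.eq_of_subset hq (hsub p₂ (hunion ▸ Finset.subset_union_right))
  exact hne (by rw [e₁, e₂])

/-- Union-freeness of the elementary s-t path structure: the union of the arc
sets of two distinct elementary s-t paths is never the arc set of an elementary
s-t path. -/
theorem stmt_2 {V A : Type} [DecidableEq V] [DecidableEq A]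
    (tail head : A → V) (s t : V) (hst : s ≠ t)
    (p₁ p₂ : List A)
    (h₁ : IsElemPath tail head s t p₁) (h₂ : IsElemPath tail head s t p₂)
    (hne : p₁.toFinset ≠ p₂.toFinset) :
    ¬ ∃ q : List A, IsElemPath tail head s t q ∧
      q.toFinset = p₁.toFinset ∪ p₂.toFinset :=
  stmt_2_general tail head s t p₁ p₂ h₁ h₂ hne
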